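/- arXiv:2411.03161 — 2 statements merged into one kernel-verified Lean document; each statement's English description precedes it below -/
import Mathlib

section
/- Let n ≥ 1, s ≥ 1, m ≥ 1, and suppose q_n^s = Σ_{k=1}^m (a_k·x)^{2s} with a_1,…,a_m ∈ ℂ^n is a first caliber decomposition, i.e., the value (a_k·a_k)^s is the same for all k. Then (a_k·a_k)^s = (1/m) · ∏_{j=0}^{s−1} (2j+n)/(2j+1) for every k = 1,…,m. -/
open MvPolynomial

noncomputable def qpoly (n : ℕ) : MvPolynomial (Fin n) ℂ :=
  ∑ i : Fin n, X i ^ 2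

noncomputable def linForm {n : ℕ} (a : Fin n → ℂ) : MvPolynomial (Fin n) ℂ :=
  ∑ i : Fin n, C (a i) * X i

noncomputable def dotC {n : ℕ} (a b : Fin n → ℂ) : ℂ :=
  ∑ i : Fin n, a i * b i

noncomputable def diffOp {n : ℕ} (φ f : MvPolynomial (Fin n) ℂ) : MvPolynomial (Fin n) ℂ :=
  ∑ d ∈ φ.support, φ.coeff d •
    ((List.ofFn fun i : Fin n =>
        ((pderiv i).toLinearMap : MvPolynomial (Fin n) ℂ →ₗ[ℂ] MvPolynomial (Fin n) ℂ) ^ d i).prod f)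

noncomputable def lap {n : ℕ} (f : MvPolynomial (Fin n) ℂ) : MvPolynomial (Fin n) ℂ :=
  ∑ i : Fin n, pderiv i (pderiv i f)

/-! Apply the `s`-th power of the Laplacian to both sides of the decomposition. By Euler's
identity for the homogeneous `q_n^p`, the Laplacian maps `q_n^(p+1)` to
`2(p+1)(2p+n) q_n^p`, so `Δ^s q_n^s = ∏_{j<s} (2j+2)(2j+n)`; it maps `(a·x)^(p+2)` to
`(p+2)(p+1)(a·a) (a·x)^p`, so `Δ^s (a·x)^(2s) = (2s)! (a·a)^s`. In a first caliber decomposition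
the right-hand side becomes `m (2s)! (a_k·a_k)^s`, and `(2s)! = ∏_{j<s} (2j+1)(2j+2)`. -/

open Finset

lemma isHomogeneous_qpoly (n : ℕ) : (qpoly n).IsHomogeneous 2 :=
  IsHomogeneous.sum _ _ _ fun i _ => isHomogeneous_X_pow i 2

lemma pderiv_qpoly {n : ℕ} (i : Fin n) : pderiv i (qpoly n) = 2 * X i := by
  simp [qpoly, pderiv_X, Pi.single_apply]

lemma pderiv_linForm {n : ℕ} (a : Fin n → ℂ) (i : Fin n) : pderiv i (linForm a) = C (a i) := by
  simp [linForm, pderiv_X, Pi.single_apply]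

lemma pderiv_qpoly_pow_succ {n : ℕ} (p : ℕ) (i : Fin n) :
    pderiv i (qpoly n ^ (p + 1)) = C (2 * ((p : ℂ) + 1)) * (X i * qpoly n ^ p) := by
  rw [Derivation.leibniz_pow, pderiv_qpoly, Nat.add_sub_cancel, nsmul_eq_mul, smul_eq_mul]
  simp only [map_mul, map_add, map_natCast, map_ofNat, map_one, Nat.cast_add, Nat.cast_one]
  ring

lemma pderiv_linForm_pow_succ {n : ℕ} (a : Fin n → ℂ) (p : ℕ) (i : Fin n) :
    pderiv i (linForm a ^ (p + 1)) = C (((p : ℂ) + 1) * a i) * linForm a ^ p := by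
  rw [Derivation.leibniz_pow, pderiv_linForm, Nat.add_sub_cancel, nsmul_eq_mul, smul_eq_mul]
  simp only [map_mul, map_add, map_natCast, map_one, Nat.cast_add, Nat.cast_one]
  ring

lemma lap_qpoly_pow_succ (n p : ℕ) :
    lap (qpoly n ^ (p + 1)) = C (2 * ((p : ℂ) + 1) * (2 * p + n)) * qpoly n ^ p := by
  have euler : ∑ i : Fin n, X i * pderiv i (qpoly n ^ p) = C (2 * (p : ℂ)) * qpoly n ^ p := by
    rw [((isHomogeneous_qpoly n).pow p).sum_X_mul_pderiv, nsmul_eq_mul]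
    simp only [map_mul, map_natCast, map_ofNat, Nat.cast_mul, Nat.cast_ofNat]
  simp only [lap, pderiv_qpoly_pow_succ, Derivation.leibniz, pderiv_C, pderiv_X_self,
    smul_eq_mul, mul_zero, add_zero, mul_one, ← mul_sum, sum_add_distrib, euler,
    sum_const, card_univ, Fintype.card_fin, nsmul_eq_mul]
  simp only [map_mul, map_add, map_natCast, map_ofNat, map_one]
  ring

lemma lap_linForm_pow_add_two {n : ℕ} (a : Fin n → ℂ) (p : ℕ) :
    lap (linForm a ^ (p + 2)) = C (((p : ℂ) + 2) * ((p : ℂ) + 1) * dotC a a) * linForm a ^ p := by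
  simp only [lap, pderiv_linForm_pow_succ, Derivation.leibniz, pderiv_C, smul_eq_mul, mul_zero,
    add_zero, ← mul_assoc, ← map_mul, ← sum_mul, ← map_sum, dotC, mul_sum]
  congr 2
  exact sum_congr rfl fun i _ => by push_cast; ring

noncomputable def laplacian (n : ℕ) : MvPolynomial (Fin n) ℂ →ₗ[ℂ] MvPolynomial (Fin n) ℂ :=
  ∑ i : Fin n, (pderiv i).toLinearMap ∘ₗ (pderiv i).toLinearMap

lemma laplacian_apply {n : ℕ} (f : MvPolynomial (Fin n) ℂ) : laplacian n f = lap f := by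
  simp [laplacian, lap, LinearMap.sum_apply]

lemma laplacian_pow_qpoly_pow (n s : ℕ) :
    (laplacian n ^ s) (qpoly n ^ s) =
      C (∏ j ∈ range s, ((2 * (j : ℂ) + 2) * (2 * j + n))) := by
  induction s with
  | zero => simp
  | succ s ih =>
    rw [pow_succ, Module.End.mul_apply, laplacian_apply, lap_qpoly_pow_succ, ← smul_eq_C_mul,
      map_smul, ih, smul_eq_C_mul, ← map_mul, prod_range_succ]
    congr 1
    ring

lemma laplacian_pow_linForm_pow {n : ℕ} (a : Fin n → ℂ) (s : ℕ) :
    (laplacian n ^ s) (linForm a ^ (2 * s)) = C ((2 * s).factorial * dotC a a ^ s) := by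
  induction s with
  | zero => simp
  | succ s ih =>
    rw [pow_succ, Module.End.mul_apply, laplacian_apply, mul_add_one, lap_linForm_pow_add_two,
      ← smul_eq_C_mul, map_smul, ih, smul_eq_C_mul, ← map_mul, mul_add_one, Nat.factorial_succ,
      Nat.factorial_succ]
    congr 1
    push_cast
    ring

lemma prod_eq_factorial_mul_prod_div (n s : ℕ) :
    ∏ j ∈ range s, ((2 * (j : ℂ) + 2) * (2 * j + n)) =
      (2 * s).factorial * ∏ j ∈ range s, (2 * (j : ℂ) + n) / (2 * j + 1) := by
  induction s with
  | zero => simp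
  | succ s ih =>
    have hodd : (2 * (s : ℂ) + 1) ≠ 0 := by exact_mod_cast (2 * s).succ_ne_zero
    rw [prod_range_succ, prod_range_succ, ih, mul_add_one, Nat.factorial_succ, Nat.factorial_succ]
    push_cast
    field_simp
    ring

theorem first_caliber_value_general (n s m : ℕ)
    (a : Fin m → Fin n → ℂ)
    (hdec : qpoly n ^ s = ∑ k : Fin m, linForm (a k) ^ (2 * s))
    (hfc : ∀ k l : Fin m, (dotC (a k) (a k)) ^ s = (dotC (a l) (a l)) ^ s) :
    ∀ k : Fin m, (dotC (a k) (a k)) ^ s =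
      (1 / (m : ℂ)) * ∏ j ∈ Finset.range s, ((2 * (j : ℂ) + (n : ℂ)) / (2 * (j : ℂ) + 1)) := by
  intro k
  have h := congrArg (laplacian n ^ s) hdec
  simp only [laplacian_pow_qpoly_pow, map_sum, laplacian_pow_linForm_pow, hfc _ k, sum_const,
    card_univ, Fintype.card_fin, nsmul_eq_mul, ← map_natCast C, ← map_mul] at h
  rw [C_inj, prod_eq_factorial_mul_prod_div, mul_left_comm] at h
  have hfact : ((2 * s).factorial : ℂ) ≠ 0 := by exact_mod_cast (2 * s).factorial_ne_zero
  have hm : (m : ℂ) ≠ 0 := by exact_mod_cast (Fin.pos k).ne'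
  rw [mul_left_cancel₀ hfact h]
  field_simp

/-- If q_n^s = Σ_{k=1}^m (a_k·x)^{2s} is a first caliber decomposition, then
(a_k·a_k)^s = (1/m) · ∏_{j=0}^{s−1} (2j+n)/(2j+1) for every k. -/
theorem first_caliber_value (n s m : ℕ) (hn : 1 ≤ n) (hs : 1 ≤ s) (hm : 1 ≤ m)
    (a : Fin m → Fin n → ℂ)
    (hdec : qpoly n ^ s = ∑ k : Fin m, linForm (a k) ^ (2 * s))
    (hfc : ∀ k l : Fin m, (dotC (a k) (a k)) ^ s = (dotC (a l) (a l)) ^ s) :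
    ∀ k : Fin m, (dotC (a k) (a k)) ^ s =
      (1 / (m : ℂ)) * ∏ j ∈ Finset.range s, ((2 * (j : ℂ) + (n : ℂ)) / (2 * (j : ℂ) + 1)) :=
  first_caliber_value_general n s m a hdec hfc
end

section
/- Let n ≥ 2 and suppose q_n^3 admits a tight Waring decomposition, i.e., there exist points a_1,…,a_{T_{n,3}} ∈ ℂ^n with q_n^3 = Σ_{j=1}^{T_{n,3}} (a_j·x)^6, where T_{n,3} = binom(n+2, 3). Then n ≡ 2 (mod 3). -/
open MvPolynomial

/-!
Write `r_k = a_k·a_k`. Applying the Laplacian to `q³ = ∑ (a_k·x)⁶` gives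
`6(n+4) q² = 30 ∑ r_k (a_k·x)⁴`. Combining three derivatives `D_b = b·∇` of the decomposition
with one derivative of this identity expresses every cube `(b·x)³` through the `T_{n,3}` cubes
`(a_k·x)³`. These therefore span the cubic forms and are linearly independent, and comparing
coefficients for `b = a_j` gives `5(n+1) r_j³ = 2(n+4)`, and `(n+4)(a_j·a_k)² = 3 r_j r_k`
whenever `j ≠ k` and `a_j·a_k ≠ 0`.

If no `a_j·a_k` with `j ≠ k` vanished, evaluating the decomposition at `a_j` would force `n = 1`.
So some `a_i·a_j` vanishes; evaluating two derivatives `D_{a_i}` of the Laplacian identity at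
`a_j` then gives `(n+1)(n+4)² = 54 μ`, where `μ` counts the `k` with `a_i·a_k ≠ 0 ≠ a_j·a_k`.
Hence `3 ∣ n + 1`.
-/

variable {n : ℕ}

local notation "R" => MvPolynomial (Fin n) ℂ

lemma eval_linForm (v c : Fin n → ℂ) : eval v (linForm c) = dotC c v := by
  simp [linForm, dotC]

lemma eval_qpoly (v : Fin n → ℂ) : eval v (qpoly n) = dotC v v := by
  simp [qpoly, dotC, sq]

lemma linForm_add (b c : Fin n → ℂ) : linForm (b + c) = linForm b + linForm c := by
  simp [linForm, add_mul, Finset.sum_add_distrib]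

lemma linForm_single (i : Fin n) : linForm (Pi.single i 1) = X i := by
  simp [linForm, Pi.single_apply]

lemma dotC_single_left (i : Fin n) (c : Fin n → ℂ) : dotC (Pi.single i 1) c = c i := by
  simp [dotC, Pi.single_apply]

noncomputable def dirDeriv (b : Fin n → ℂ) : Derivation ℂ R R :=
  ∑ i, b i • pderiv i

lemma dirDeriv_apply (b : Fin n → ℂ) (f : R) : dirDeriv b f = ∑ i, C (b i) * pderiv i f := by
  rw [dirDeriv, ← Derivation.coeFnAddMonoidHom_apply, map_sum, Finset.sum_apply]
  simp [smul_eq_C_mul]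

lemma pderiv_eq_dirDeriv_single (i : Fin n) : pderiv i = dirDeriv (Pi.single i 1) := by
  ext f
  simp [dirDeriv_apply, Pi.single_apply]

lemma dirDeriv_X (b : Fin n → ℂ) (i : Fin n) : dirDeriv b (X i) = C (b i) := by
  classical
  simp [dirDeriv_apply, pderiv_X, Pi.single_apply]

lemma dirDeriv_C (b : Fin n → ℂ) (x : ℂ) : dirDeriv b (C x) = 0 :=
  (dirDeriv b).map_algebraMap x

lemma dirDeriv_C_mul (b : Fin n → ℂ) (x : ℂ) (f : R) :
    dirDeriv b (C x * f) = C x * dirDeriv b f := by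
  rw [← smul_eq_C_mul, Derivation.map_smul, smul_eq_C_mul]

lemma dirDeriv_linForm (b c : Fin n → ℂ) : dirDeriv b (linForm c) = C (dotC b c) := by
  simp [linForm, dirDeriv_X, dotC, mul_comm]

lemma dirDeriv_qpoly (b : Fin n → ℂ) : dirDeriv b (qpoly n) = C 2 * linForm b := by
  simp [qpoly, dirDeriv_X, linForm, Finset.mul_sum, Derivation.leibniz_pow, mul_comm, map_ofNat]

lemma dirDeriv_linForm_pow (b c : Fin n → ℂ) (m : ℕ) :
    dirDeriv b (linForm c ^ (m + 1)) = C ((m + 1 : ℂ) * dotC b c) * linForm c ^ m := by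
  rw [Derivation.leibniz_pow, dirDeriv_linForm, nsmul_eq_mul, smul_eq_mul, map_mul,
    Nat.add_sub_cancel]
  simp only [Nat.cast_add, Nat.cast_one, map_add, map_natCast, map_one]
  ring

lemma dirDeriv_qpoly_pow (b : Fin n → ℂ) (m : ℕ) :
    dirDeriv b (qpoly n ^ (m + 1)) = C (2 * (m + 1 : ℂ)) * qpoly n ^ m * linForm b := by
  rw [Derivation.leibniz_pow, dirDeriv_qpoly, nsmul_eq_mul, smul_eq_mul, map_mul,
    Nat.add_sub_cancel]
  simp only [Nat.cast_add, Nat.cast_one, map_add, map_natCast, map_one]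
  ring

lemma dirDeriv_sum_C_mul_linForm_pow {ι : Type*} [Fintype ι] (a : ι → Fin n → ℂ)
    (b : Fin n → ℂ) (s : ι → ℂ) (m : ℕ) :
    dirDeriv b (∑ k, C (s k) * linForm (a k) ^ (m + 1)) =
      ∑ k, C ((m + 1) * s k * dotC b (a k)) * linForm (a k) ^ m := by
  simp only [map_sum, dirDeriv_C_mul, dirDeriv_linForm_pow, ← mul_assoc, ← map_mul]
  congr! 3
  ring

lemma dirDeriv_dirDeriv_qpoly_pow_three (b : Fin n → ℂ) :
    dirDeriv b (dirDeriv b (qpoly n ^ 3)) =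
      C 24 * qpoly n * linForm b ^ 2 + C (6 * dotC b b) * qpoly n ^ 2 := by
  simp only [dirDeriv_qpoly_pow, dirDeriv_linForm, Derivation.leibniz, smul_eq_mul, dirDeriv_C]
  simp only [map_add, map_mul, map_one, map_ofNat, Nat.cast_ofNat, Nat.cast_one]
  ring

lemma dirDeriv_dirDeriv_dirDeriv_qpoly_pow_three (b : Fin n → ℂ) :
    dirDeriv b (dirDeriv b (dirDeriv b (qpoly n ^ 3))) =
      C 48 * linForm b ^ 3 + C (72 * dotC b b) * qpoly n * linForm b := by
  rw [dirDeriv_dirDeriv_qpoly_pow_three]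
  simp only [dirDeriv_qpoly, dirDeriv_qpoly_pow, dirDeriv_linForm_pow, Derivation.leibniz,
    smul_eq_mul, dirDeriv_C, map_add]
  simp only [map_add, map_mul, map_one, map_ofNat, Nat.cast_one]
  ring

lemma lap_eq_sum_dirDeriv (f : R) :
    lap f = ∑ i, dirDeriv (Pi.single i 1) (dirDeriv (Pi.single i 1) f) := by
  simp only [lap, pderiv_eq_dirDeriv_single]

lemma lap_sum {ι : Type*} (s : Finset ι) (f : ι → R) :
    lap (∑ k ∈ s, f k) = ∑ k ∈ s, lap (f k) := by
  simp only [lap, map_sum]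
  exact Finset.sum_comm

lemma lap_qpoly_pow_three : lap (qpoly n ^ 3) = C (6 * ((n : ℂ) + 4)) * qpoly n ^ 2 := by
  simp only [lap_eq_sum_dirDeriv, dirDeriv_dirDeriv_qpoly_pow_three, linForm_single,
    dotC_single_left, Finset.sum_add_distrib, ← Finset.mul_sum, ← Finset.sum_mul]
  simp [qpoly, map_ofNat]
  ring

lemma lap_linForm_pow (c : Fin n → ℂ) (m : ℕ) :
    lap (linForm c ^ (m + 2)) = C (((m : ℂ) + 2) * (m + 1) * dotC c c) * linForm c ^ m := by
  simp only [lap_eq_sum_dirDeriv, dirDeriv_linForm_pow, dirDeriv_C_mul, dotC_single_left,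
    ← mul_assoc, ← map_mul, ← Finset.sum_mul, ← map_sum]
  congr 2
  simp only [dotC, Finset.mul_sum]
  push_cast
  exact Finset.sum_congr rfl fun i _ => by ring

lemma X_mul_X_mul_X_mem_of_linForm_cube_mem {M : Submodule ℂ R}
    (hM : ∀ b : Fin n → ℂ, linForm b ^ 3 ∈ M) (i j k : Fin n) : X i * X j * X k ∈ M := by
  set e : Fin n → Fin n → ℂ := fun i => Pi.single i 1
  have h : (6 : ℂ) • (X i * X j * X k : R) =
      linForm (e i + e j + e k) ^ 3 - linForm (e i + e j) ^ 3 - linForm (e i + e k) ^ 3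
        - linForm (e j + e k) ^ 3 + linForm (e i) ^ 3 + linForm (e j) ^ 3 + linForm (e k) ^ 3 := by
    simp only [e, linForm_add, linForm_single, smul_eq_C_mul, map_ofNat]
    ring
  have h6 : (6 : ℂ) • (X i * X j * X k : R) ∈ M := by
    rw [h]
    apply_rules [Submodule.add_mem, Submodule.sub_mem]
  simpa using M.smul_mem (6 : ℂ)⁻¹ h6

lemma exists_monomial_sym_eq_X_mul_X_mul_X (s : Sym (Fin n) 3) :
    ∃ i j k, (monomial (Multiset.toFinsupp s.1) 1 : R) = X i * X j * X k := by
  obtain ⟨i, j, k, hs⟩ := Multiset.card_eq_three.mp s.2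
  refine ⟨i, j, k, ?_⟩
  rw [hs, Multiset.insert_eq_cons, Multiset.insert_eq_cons, ← Multiset.singleton_add,
    ← Multiset.singleton_add, Multiset.toFinsupp_add, Multiset.toFinsupp_add]
  simp only [Multiset.toFinsupp_singleton, X, monomial_mul, one_mul, add_assoc]

lemma linearIndependent_of_linForm_cube_mem_span {ι : Type*} [Fintype ι] (f : ι → R)
    (hcard : Fintype.card ι ≤ (n + 2).choose 3)
    (hspan : ∀ b : Fin n → ℂ, linForm b ^ 3 ∈ Submodule.span ℂ (Set.range f)) :
    LinearIndependent ℂ f := by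
  let m : Sym (Fin n) 3 → R := fun s => monomial (Multiset.toFinsupp s.1) 1
  have hm : LinearIndependent ℂ m :=
    (basisMonomials (Fin n) ℂ).linearIndependent.comp _
      fun s t h => Sym.coe_injective (Multiset.toFinsupp.injective h)
  have hle : Submodule.span ℂ (Set.range m) ≤ Submodule.span ℂ (Set.range f) := by
    refine Submodule.span_le.mpr ?_
    rintro _ ⟨s, rfl⟩
    obtain ⟨i, j, k, h⟩ := exists_monomial_sym_eq_X_mul_X_mul_X s
    rw [show m s = _ from h]
    exact X_mul_X_mul_X_mem_of_linForm_cube_mem hspan i j k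
  have : FiniteDimensional ℂ (Submodule.span ℂ (Set.range f)) :=
    FiniteDimensional.span_of_finite ℂ (Set.finite_range f)
  rw [linearIndependent_iff_card_le_finrank_span]
  calc Fintype.card ι ≤ (n + 2).choose 3 := hcard
    _ = Fintype.card (Sym (Fin n) 3) := by simp [Sym.card_sym_eq_choose]
    _ = (Set.range m).finrank ℂ := linearIndependent_iff_card_eq_finrank_span.mp hm
    _ ≤ (Set.range f).finrank ℂ := Submodule.finrank_mono hle

lemma six_mul_choose_three (m : ℕ) : 6 * (m + 2).choose 3 = m * (m + 1) * (m + 2) := by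
  have h := Nat.descFactorial_eq_factorial_mul_choose (m + 2) 3
  norm_num [Nat.descFactorial, Nat.factorial] at h
  linarith

lemma mod_three_eq_two_of_three_dvd {m : ℕ} (h : 3 ∣ (m + 1) * (m + 4) ^ 2) : m % 3 = 2 := by
  rcases (Nat.Prime.dvd_mul Nat.prime_three).mp h with h1 | h4
  · omega
  · have := Nat.prime_three.dvd_of_dvd_pow h4
    omega

def IsWaringDecomposition {ι : Type*} [Fintype ι] (a : ι → Fin n → ℂ) : Prop :=
  qpoly n ^ 3 = ∑ k, linForm (a k) ^ 6

namespace IsWaringDecomposition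

variable {ι : Type*} [Fintype ι] {a : ι → Fin n → ℂ}

lemma dotC_self_pow_three_eq_sum (h : IsWaringDecomposition a) (v : Fin n → ℂ) :
    dotC v v ^ 3 = ∑ k, dotC (a k) v ^ 6 := by
  simpa [eval_qpoly, eval_linForm] using congrArg (eval v) h

lemma qpoly_sq_eq_sum (h : IsWaringDecomposition a) :
    C (6 * ((n : ℂ) + 4)) * qpoly n ^ 2 =
      ∑ k, C (30 * dotC (a k) (a k)) * linForm (a k) ^ 4 := by
  rw [← lap_qpoly_pow_three, h, lap_sum]
  refine Finset.sum_congr rfl fun k _ => ?_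
  rw [lap_linForm_pow]
  norm_num

lemma qpoly_mul_linForm_eq_sum (h : IsWaringDecomposition a) (b : Fin n → ℂ) :
    C (24 * ((n : ℂ) + 4)) * qpoly n * linForm b =
      ∑ k, C (120 * dotC (a k) (a k) * dotC b (a k)) * linForm (a k) ^ 3 := by
  have h' := congrArg (dirDeriv b) h.qpoly_sq_eq_sum
  rw [dirDeriv_sum_C_mul_linForm_pow, dirDeriv_C_mul, dirDeriv_qpoly_pow] at h'
  convert h' using 1
  · simp only [map_add, map_mul, map_one, map_ofNat, map_natCast, Nat.cast_one]
    ring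
  · refine Finset.sum_congr rfl fun k _ => ?_
    simp only [map_add, map_mul, map_one, map_ofNat, Nat.cast_ofNat]
    ring

lemma linForm_sq_add_qpoly_eq_sum (h : IsWaringDecomposition a) (b : Fin n → ℂ) :
    C (24 * ((n : ℂ) + 4)) * (C 2 * linForm b ^ 2 + C (dotC b b) * qpoly n) =
      ∑ k, C (360 * dotC (a k) (a k) * dotC b (a k) ^ 2) * linForm (a k) ^ 2 := by
  have h' := congrArg (dirDeriv b) (h.qpoly_mul_linForm_eq_sum b)
  rw [dirDeriv_sum_C_mul_linForm_pow] at h'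
  simp only [Derivation.leibniz, dirDeriv_C, dirDeriv_qpoly, dirDeriv_linForm, smul_eq_mul] at h'
  convert h' using 1
  · simp only [map_add, map_mul, map_ofNat, map_natCast]
    ring
  · refine Finset.sum_congr rfl fun k _ => ?_
    simp only [map_add, map_mul, map_pow, map_one, map_ofNat, Nat.cast_ofNat]
    ring

lemma sum_sq_mul_sq (h : IsWaringDecomposition a) (b c : Fin n → ℂ) :
    24 * ((n : ℂ) + 4) * (2 * dotC b c ^ 2 + dotC b b * dotC c c) =
      360 * ∑ k, dotC (a k) (a k) * dotC b (a k) ^ 2 * dotC (a k) c ^ 2 := by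
  have h' := congrArg (eval c) (h.linForm_sq_add_qpoly_eq_sum b)
  simp only [map_mul, map_add, map_sum, map_pow, eval_C, eval_linForm, eval_qpoly] at h'
  rw [h', Finset.mul_sum]
  exact Finset.sum_congr rfl fun k _ => by ring

lemma linForm_cube_add_qpoly_eq_sum (h : IsWaringDecomposition a) (b : Fin n → ℂ) :
    C 48 * linForm b ^ 3 + C (72 * dotC b b) * qpoly n * linForm b =
      ∑ k, C (120 * dotC b (a k) ^ 3) * linForm (a k) ^ 3 := by
  rw [← dirDeriv_dirDeriv_dirDeriv_qpoly_pow_three, h, map_sum]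
  simp only [dirDeriv_linForm_pow, dirDeriv_sum_C_mul_linForm_pow]
  refine Finset.sum_congr rfl fun k _ => ?_
  simp only [map_add, map_mul, map_pow, map_one, map_ofNat, Nat.cast_ofNat]
  ring

lemma smul_linForm_cube_eq_sum (h : IsWaringDecomposition a) (b : Fin n → ℂ) :
    (48 * ((n : ℂ) + 4)) • linForm b ^ 3 =
      ∑ k, (120 * (((n : ℂ) + 4) * dotC b (a k) ^ 3
        - 3 * dotC b b * dotC (a k) (a k) * dotC b (a k))) • linForm (a k) ^ 3 := by
  have hsplit : ∑ k, (120 * (((n : ℂ) + 4) * dotC b (a k) ^ 3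
        - 3 * dotC b b * dotC (a k) (a k) * dotC b (a k))) • linForm (a k) ^ 3 =
      C ((n : ℂ) + 4) * ∑ k, C (120 * dotC b (a k) ^ 3) * linForm (a k) ^ 3
        - C (3 * dotC b b) *
          ∑ k, C (120 * dotC (a k) (a k) * dotC b (a k)) * linForm (a k) ^ 3 := by
    rw [Finset.mul_sum, Finset.mul_sum, ← Finset.sum_sub_distrib]
    refine Finset.sum_congr rfl fun k _ => ?_
    simp only [smul_eq_C_mul, map_mul, map_sub, map_add, map_pow, map_ofNat, map_natCast]
    ring
  rw [hsplit, ← h.linForm_cube_add_qpoly_eq_sum, ← h.qpoly_mul_linForm_eq_sum, smul_eq_C_mul]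
  simp only [map_add, map_mul, map_ofNat, map_natCast]
  ring

lemma linForm_cube_mem_span (h : IsWaringDecomposition a) (b : Fin n → ℂ) :
    linForm b ^ 3 ∈ Submodule.span ℂ (Set.range fun k => linForm (a k) ^ 3) := by
  have h48 : (48 * ((n : ℂ) + 4)) ≠ 0 := by norm_cast
  rw [← inv_smul_smul₀ h48 (linForm b ^ 3), h.smul_linForm_cube_eq_sum]
  exact Submodule.smul_mem _ _ <| Submodule.sum_mem _ fun k _ =>
    Submodule.smul_mem _ _ (Submodule.subset_span ⟨k, rfl⟩)

lemma coeff_linForm_cube [DecidableEq ι] (h : IsWaringDecomposition a)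
    (hli : LinearIndependent ℂ fun k => linForm (a k) ^ 3) (j k : ι) :
    120 * (((n : ℂ) + 4) * dotC (a j) (a k) ^ 3
        - 3 * dotC (a j) (a j) * dotC (a k) (a k) * dotC (a j) (a k)) =
      if k = j then 48 * ((n : ℂ) + 4) else 0 := by
  refine Fintype.linearIndependent_iffₛ.mp hli _
    (fun k => if k = j then 48 * ((n : ℂ) + 4) else 0)
    ((h.smul_linForm_cube_eq_sum (a j)).symm.trans ?_) k
  simp [ite_smul]

lemma dotC_self_pow_three (h : IsWaringDecomposition a)
    (hli : LinearIndependent ℂ fun k => linForm (a k) ^ 3) (j : ι) :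
    5 * ((n : ℂ) + 1) * dotC (a j) (a j) ^ 3 = 2 * ((n : ℂ) + 4) := by
  classical
  have hj := h.coeff_linForm_cube hli j j
  rw [if_pos rfl] at hj
  linear_combination hj / 24

lemma dotC_self_ne_zero (h : IsWaringDecomposition a)
    (hli : LinearIndependent ℂ fun k => linForm (a k) ^ 3) (j : ι) : dotC (a j) (a j) ≠ 0 := by
  intro h0
  have hj := h.dotC_self_pow_three hli j
  rw [h0] at hj
  norm_cast at hj

lemma dotC_sq (h : IsWaringDecomposition a)
    (hli : LinearIndependent ℂ fun k => linForm (a k) ^ 3) {j k : ι} (hjk : j ≠ k)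
    (hne : dotC (a j) (a k) ≠ 0) :
    ((n : ℂ) + 4) * dotC (a j) (a k) ^ 2 = 3 * dotC (a j) (a j) * dotC (a k) (a k) := by
  classical
  have hjk' := h.coeff_linForm_cube hli j k
  rw [if_neg hjk.symm] at hjk'
  apply mul_right_cancel₀ hne
  linear_combination hjk' / 120

lemma mod_three_eq_two_of_dotC_eq_zero (h : IsWaringDecomposition a)
    (hli : LinearIndependent ℂ fun k => linForm (a k) ^ 3) {i j : ι}
    (h0 : dotC (a i) (a j) = 0) : n % 3 = 2 := by
  classical
  have hpol := h.sum_sq_mul_sq (a i) (a j)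
  rw [h0] at hpol
  set r := fun k => dotC (a k) (a k)
  set P := fun k => dotC (a i) (a k) ≠ 0 ∧ dotC (a k) (a j) ≠ 0
  have hterm : ∀ k, 5 * ((n : ℂ) + 1) * ((n : ℂ) + 4) ^ 2 *
      (r k * dotC (a i) (a k) ^ 2 * dotC (a k) (a j) ^ 2) =
        (if P k then 1 else 0) * (18 * ((n : ℂ) + 4) * (r i * r j)) := by
    intro k
    by_cases hk : P k
    · obtain ⟨hik, hkj⟩ := hk
      have hki : i ≠ k := by rintro rfl; exact hkj h0
      have hjk : k ≠ j := by rintro rfl; exact hik h0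
      rw [if_pos ⟨hik, hkj⟩]
      -- `(n+4)² (a_i·a_k)² (a_k·a_j)² = 9 r_i r_j r_k²` and `5(n+1) r_k³ = 2(n+4)`
      linear_combination
        (5 * ((n : ℂ) + 1) * r k * ((n : ℂ) + 4) * dotC (a k) (a j) ^ 2) *
          h.dotC_sq hli hki hik +
        (15 * ((n : ℂ) + 1) * r k ^ 2 * r i) * h.dotC_sq hli hjk hkj +
        (9 * r i * r j) * h.dotC_self_pow_three hli k
    · rw [if_neg hk]
      rcases not_and_or.mp hk with hz | hz <;> simp [not_not.mp hz]
  have hcount : 5 * ((n : ℂ) + 1) * ((n : ℂ) + 4) ^ 2 *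
      ∑ k, r k * dotC (a i) (a k) ^ 2 * dotC (a k) (a j) ^ 2 =
        (Finset.univ.filter P).card * (18 * ((n : ℂ) + 4) * (r i * r j)) := by
    rw [Finset.mul_sum, Finset.sum_congr rfl fun k _ => hterm k, ← Finset.sum_mul,
      Finset.sum_boole]
  have hne : 18 * ((n : ℂ) + 4) * (r i * r j) ≠ 0 := by
    have hn4 : ((n : ℂ) + 4) ≠ 0 := by norm_cast
    exact mul_ne_zero (mul_ne_zero (by norm_num) hn4)
      (mul_ne_zero (h.dotC_self_ne_zero hli i) (h.dotC_self_ne_zero hli j))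
  have hμ : (((n + 1) * (n + 4) ^ 2 : ℕ) : ℂ) =
      ((54 * (Finset.univ.filter P).card : ℕ) : ℂ) := by
    apply mul_right_cancel₀ hne
    push_cast
    linear_combination (3 / 4 * ((n : ℂ) + 1) * ((n : ℂ) + 4) ^ 2) * hpol + 54 * hcount
  apply mod_three_eq_two_of_three_dvd
  rw [Nat.cast_inj.mp hμ]
  exact ⟨18 * _, by ring⟩

lemma exists_dotC_eq_zero (h : IsWaringDecomposition a)
    (hli : LinearIndependent ℂ fun k => linForm (a k) ^ 3) (hn : 2 ≤ n)
    (hcard : Fintype.card ι = (n + 2).choose 3) : ∃ i j, i ≠ j ∧ dotC (a i) (a j) = 0 := by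
  classical
  by_contra! hB
  obtain ⟨j⟩ : Nonempty ι := Fintype.card_pos_iff.mp (hcard ▸ Nat.choose_pos (by omega))
  have hR := h.dotC_self_pow_three hli
  set K := 25 * ((n : ℂ) + 1) ^ 2 * ((n : ℂ) + 4) ^ 3
  have hterm : ∀ k, K * dotC (a k) (a j) ^ 6 = 108 * ((n : ℂ) + 4) ^ 2 +
      if k = j then K * dotC (a j) (a j) ^ 6 - 108 * ((n : ℂ) + 4) ^ 2 else 0 := by
    intro k
    by_cases hkj : k = j
    · subst hkj
      simp
    · rw [if_neg hkj]
      set X := ((n : ℂ) + 4) * dotC (a k) (a j) ^ 2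
      set Y := 3 * dotC (a k) (a k) * dotC (a j) (a j)
      -- `(n+4)³ (a_k·a_j)⁶ = 27 r_k³ r_j³`, and `5(n+1) r³ = 2(n+4)` for `r = r_k, r_j`
      linear_combination (25 * ((n : ℂ) + 1) ^ 2 * (X ^ 2 + X * Y + Y ^ 2)) *
          h.dotC_sq hli hkj (hB k j hkj) +
        (135 * ((n : ℂ) + 1) * dotC (a j) (a j) ^ 3) * hR k + (54 * ((n : ℂ) + 4)) * hR j
  have hsum : K * ∑ k, dotC (a k) (a j) ^ 6 = Fintype.card ι * (108 * ((n : ℂ) + 4) ^ 2) +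
      (K * dotC (a j) (a j) ^ 6 - 108 * ((n : ℂ) + 4) ^ 2) := by
    rw [Finset.mul_sum, Finset.sum_congr rfl fun k _ => hterm k, Finset.sum_add_distrib,
      Finset.sum_const, Finset.sum_ite_eq', if_pos (Finset.mem_univ j), Finset.card_univ,
      nsmul_eq_mul]
  have hT : 6 * (Fintype.card ι : ℂ) = n * (n + 1) * (n + 2) := by
    rw [hcard]
    exact_mod_cast six_mul_choose_three n
  have hn1 : 12 * ((n : ℂ) - 1) * ((n : ℂ) + 1) ^ 2 * ((n : ℂ) + 4) ^ 2 = 0 := by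
    linear_combination -(K * h.dotC_self_pow_three_eq_sum (a j) + hsum) +
      (5 * ((n : ℂ) + 1) * ((n : ℂ) + 4) ^ 3 - ((n : ℂ) + 4) ^ 3 *
        (5 * ((n : ℂ) + 1) * dotC (a j) (a j) ^ 3 + 2 * ((n : ℂ) + 4))) * hR j -
      18 * ((n : ℂ) + 4) ^ 2 * hT
  have h1 : (n : ℂ) - 1 ≠ 0 := sub_ne_zero.mpr (by exact_mod_cast (by omega : n ≠ 1))
  have h2 : (n : ℂ) + 1 ≠ 0 := by norm_cast
  have h4 : (n : ℂ) + 4 ≠ 0 := by norm_cast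
  exact mul_ne_zero (mul_ne_zero (mul_ne_zero (by norm_num) h1) (pow_ne_zero 2 h2))
    (pow_ne_zero 2 h4) hn1

end IsWaringDecomposition

/-- If q_n^3 (n ≥ 2) admits a tight Waring decomposition into T_{n,3} sixth
powers of linear forms, then n ≡ 2 (mod 3). -/
theorem tight_decomposition_cube_of_quadric (n : ℕ) (hn : 2 ≤ n)
    (a : Fin ((n + 2).choose 3) → Fin n → ℂ)
    (hdec : qpoly n ^ 3 = ∑ k, linForm (a k) ^ 6) :
    n % 3 = 2 := by
  have h : IsWaringDecomposition a := hdec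
  have hcard : Fintype.card (Fin ((n + 2).choose 3)) = (n + 2).choose 3 := Fintype.card_fin _
  have hli : LinearIndependent ℂ fun k => linForm (a k) ^ 3 :=
    linearIndependent_of_linForm_cube_mem_span _ hcard.le h.linForm_cube_mem_span
  obtain ⟨i, j, -, h0⟩ := h.exists_dotC_eq_zero hli hn hcard
  exact h.mod_three_eq_two_of_dotC_eq_zero hli h0
end
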